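/- Let $g \in (\mathbb{C}[[w]]_{*})^m$ be an $m$-tuple of formal power series with $g(0)=0$ (in variables $w$), and let $(\psi_\beta)_{\beta\in\mathbb{N}^m}$ and $(\omega_\beta)_{\beta\in\mathbb{N}^m}$ be families of formal power series in $\mathbb{C}[[w]]$. Then the infinite triangular system $\psi_\beta + \sum_{\gamma\in\mathbb{N}^m_*} \frac{(\beta+\gamma)!}{\beta!\,\gamma!}\, g^\gamma\, \psi_{\beta+\gamma} = \omega_\beta$ for all $\beta\in\mathbb{N}^m$ holds if and only if $\psi_\beta = \omega_\beta + \sum_{\gamma\in\mathbb{N}^m_*} (-1)^{|\gamma|} \frac{(\beta+\gamma)!}{\beta!\,\gamma!}\, g^\gamma\, \omega_{\beta+\gamma}$ for all $\beta\in\mathbb{N}^m$. (Here $g^\gamma = g_1^{\gamma_1}\cdots g_m^{\gamma_m}$, $\mathbb{N}^m_* = \mathbb{N}^m\setminus\{0\}$, and each sum is a well-defined formal series since $g(0)=0$.) -/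

import Mathlib

/-!
Encode a family `φ` by its generating series `Φ(x) = ∑_β φ_β x^β` in auxiliary variables `x`.
By Taylor's formula the left-hand side of the system is the `x^β`-coefficient of `Φ(x + g)` and
the right-hand side of the claimed solution is that of `Ω(x - g)`, so the statement says that
translation by `g` and by `-g` are mutually inverse. On coefficients this is the multinomial
identity `∑_{γ+δ=σ} ε^|γ| (-ε)^|δ| σ!/(γ! δ!) = (ε - ε)^|σ| = 0` for `σ ≠ 0`, together with
`(β+γ)!/(β! γ!) · (β+σ)!/((β+γ)! δ!) = (β+σ)!/(β! σ!) · σ!/(γ! δ!)`. All sums are finite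
coefficientwise because `g^γ` has order at least `|γ|`.
-/

noncomputable section

def mdeg {σ : Type*} (e : σ →₀ ℕ) : ℕ := e.sum fun _ n => n

/-- Formal sum of a family `F γ` of power series, assuming (as in the application)
that `F γ` has order at least `|γ|`, so that each coefficient is a finite sum. -/
def mSum {m : ℕ} (F : (Fin m →₀ ℕ) → MvPowerSeries (Fin m) ℂ) : MvPowerSeries (Fin m) ℂ :=
  fun e => ∑ γ ∈ Finset.Iic (Finsupp.equivFunOnFinite.symm fun _ : Fin m => mdeg e),
    MvPowerSeries.coeff e (F γ)

/-- The multinomial coefficient (β+γ)!/(β!·γ!) = ∏_j C(β_j+γ_j, γ_j). -/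
def binomC {m : ℕ} (β γ : Fin m →₀ ℕ) : ℂ :=
  ((∏ j : Fin m, (β j + γ j).choose (γ j) : ℕ) : ℂ)

open Finset MvPowerSeries

lemma mdeg_eq_degree {σ : Type*} (e : σ →₀ ℕ) : mdeg e = e.degree := rfl

lemma Nat.add_choose_mul_add_choose (b k l : ℕ) :
    (b + k).choose k * (b + k + l).choose l = (b + (k + l)).choose (k + l) * (k + l).choose k := by
  have h := Nat.choose_mul (n := b + k + l) (k := b + k) (s := b) (Nat.le_add_right b k)
  rw [Nat.choose_symm_of_eq_add rfl, Nat.choose_symm_add, Nat.add_sub_cancel_left,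
    Nat.choose_symm_of_eq_add (show b + k + l = b + (k + l) by omega),
    show b + k + l - b = k + l by omega, mul_comm] at h
  rwa [← add_assoc]

lemma binomC_zero_right {m : ℕ} (β : Fin m →₀ ℕ) : binomC β 0 = 1 := by
  simp [binomC]

lemma binomC_mul_binomC_add {m : ℕ} (β γ δ : Fin m →₀ ℕ) :
    binomC β γ * binomC (β + γ) δ
      = binomC β (γ + δ) * ∏ j, (((γ + δ) j).choose (γ j) : ℂ) := by
  simp only [binomC, Finsupp.coe_add, Pi.add_apply]
  push_cast [← prod_mul_distrib]
  exact prod_congr rfl fun j _ => mod_cast Nat.add_choose_mul_add_choose (β j) (γ j) (δ j)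

lemma add_pow_degree {ι R : Type*} [Fintype ι] [DecidableEq ι] [CommSemiring R] (x y : R)
    (σ : ι →₀ ℕ) :
    (x + y) ^ σ.degree
      = ∑ γ ∈ Iic σ, x ^ γ.degree * y ^ (σ - γ).degree * ∏ j, ((σ j).choose (γ j) : R) := by
  calc (x + y) ^ σ.degree
      = ∏ j, ∑ k ∈ Iic (σ j), x ^ k * y ^ (σ j - k) * ((σ j).choose k : R) := by
        simp only [Finsupp.degree_eq_sum, ← prod_pow_eq_pow_sum, add_pow, Nat.range_succ_eq_Iic]
    _ = ∑ γ ∈ Iic σ, ∏ j, x ^ γ j * y ^ (σ j - γ j) * ((σ j).choose (γ j) : R) := by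
        rw [prod_univ_sum]
        refine (sum_equiv Finsupp.equivFunOnFinite (fun γ => ?_) fun _ _ => rfl).symm
        simp [Fintype.mem_piFinset, Finsupp.le_def]
    _ = _ := by
        simp only [prod_mul_distrib, prod_pow_eq_pow_sum, Finsupp.degree_eq_sum, Finsupp.tsub_apply]

lemma sum_Iic_pow_mul_binomC_mul_binomC {m : ℕ} (x y : ℂ) (β σ : Fin m →₀ ℕ) :
    ∑ γ ∈ Iic σ, x ^ γ.degree * y ^ (σ - γ).degree * (binomC β γ * binomC (β + γ) (σ - γ))
      = (x + y) ^ σ.degree * binomC β σ := by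
  rw [add_pow_degree, sum_mul]
  refine sum_congr rfl fun γ hγ => ?_
  rw [binomC_mul_binomC_add, add_tsub_cancel_of_le (mem_Iic.1 hγ)]
  ring

lemma sum_sum_eq_sum_sum_Iic {ι M : Type*} [DecidableEq ι] [AddCommMonoid M]
    {D : Finset (ι →₀ ℕ)} (hD : ∀ σ ∈ D, ∀ γ ≤ σ, γ ∈ D) (f : (ι →₀ ℕ) → (ι →₀ ℕ) → M)
    (hf : ∀ γ δ, γ + δ ∉ D → f γ δ = 0) :
    ∑ γ ∈ D, ∑ δ ∈ D, f γ δ = ∑ σ ∈ D, ∑ γ ∈ Iic σ, f γ (σ - γ) := by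
  have hfilter : ∑ p ∈ (D ×ˢ D).filter (fun p => p.1 + p.2 ∈ D), f p.1 p.2
      = ∑ p ∈ D ×ˢ D, f p.1 p.2 :=
    sum_filter_of_ne fun p _ h => by_contra fun hp => h (hf _ _ hp)
  rw [← sum_product', sum_sigma', ← hfilter]
  refine sum_nbij' (fun p => ⟨p.1 + p.2, p.1⟩) (fun s => (s.2, s.1 - s.2)) ?_ ?_ ?_ ?_ ?_
  · rintro ⟨γ, δ⟩ h
    simp_all
  · rintro ⟨σ, γ⟩ h
    simp only [mem_sigma, mem_Iic] at h
    simp [add_tsub_cancel_of_le h.2, h.1, hD σ h.1 γ h.2, hD σ h.1 _ tsub_le_self]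
  · rintro ⟨γ, δ⟩ _
    simp
  · rintro ⟨σ, γ⟩ h
    simp only [mem_sigma, mem_Iic] at h
    simp [add_tsub_cancel_of_le h.2]
  · rintro ⟨γ, δ⟩ _
    simp

lemma le_order_prod_pow {σ ι R : Type*} [Fintype ι] [CommSemiring R]
    {g : ι → MvPowerSeries σ R} (hg : ∀ j, constantCoeff (g j) = 0) (γ : ι →₀ ℕ) :
    (γ.degree : ℕ∞) ≤ (∏ j, g j ^ γ j).order := by
  rw [Finsupp.degree_eq_sum, Nat.cast_sum]
  exact (sum_le_sum fun j _ => le_order_pow_of_constantCoeff_eq_zero _ (hg j)).trans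
    (le_order_prod _ _)

lemma le_order_prod_pow_mul {σ ι R : Type*} [Fintype ι] [CommSemiring R]
    {g : ι → MvPowerSeries σ R} (hg : ∀ j, constantCoeff (g j) = 0) (γ : ι →₀ ℕ)
    (A : MvPowerSeries σ R) :
    (γ.degree : ℕ∞) ≤ ((∏ j, g j ^ γ j) * A).order :=
  (le_order_prod_pow hg γ).trans <| (le_add_of_nonneg_right zero_le).trans le_order_mul

section mSum

variable {m : ℕ}

def degreeBox (e : Fin m →₀ ℕ) : Finset (Fin m →₀ ℕ) :=
  Iic (Finsupp.equivFunOnFinite.symm fun _ => e.degree)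

lemma coeff_mSum (F : (Fin m →₀ ℕ) → MvPowerSeries (Fin m) ℂ) (e : Fin m →₀ ℕ) :
    coeff e (mSum F) = ∑ γ ∈ degreeBox e, coeff e (F γ) := rfl

lemma mem_degreeBox_of_degree_le {e γ : Fin m →₀ ℕ} (h : γ.degree ≤ e.degree) :
    γ ∈ degreeBox e :=
  mem_Iic.2 fun j => (Finsupp.le_degree j γ).trans h

lemma zero_mem_degreeBox (e : Fin m →₀ ℕ) : 0 ∈ degreeBox e :=
  mem_Iic.2 zero_le

lemma mSum_eq_add_mSum_ite (F : (Fin m →₀ ℕ) → MvPowerSeries (Fin m) ℂ) :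
    mSum F = F 0 + mSum fun γ => if γ = 0 then 0 else F γ := by
  ext e
  have h0 := zero_mem_degreeBox e
  rw [map_add, coeff_mSum, coeff_mSum, ← add_sum_erase _ _ h0, ← add_sum_erase _ _ h0,
    if_pos rfl, map_zero, zero_add]
  exact congrArg _ (sum_congr rfl fun γ hγ => by rw [if_neg (ne_of_mem_erase hγ)])

lemma coeff_mSum_eq_sum_of_subset {F : (Fin m →₀ ℕ) → MvPowerSeries (Fin m) ℂ}
    (hF : ∀ γ, (γ.degree : ℕ∞) ≤ (F γ).order) {e : Fin m →₀ ℕ} {S : Finset (Fin m →₀ ℕ)}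
    (hS : ∀ γ, γ.degree ≤ e.degree → γ ∈ S) :
    coeff e (mSum F) = ∑ γ ∈ S, coeff e (F γ) := by
  have hvanish : ∀ γ, ¬ γ.degree ≤ e.degree → coeff e (F γ) = 0 := fun γ h =>
    coeff_of_lt_order ((Nat.cast_lt.2 (not_le.1 h)).trans_le (hF γ))
  calc coeff e (mSum F) = ∑ γ ∈ degreeBox e ∩ S, coeff e (F γ) :=
        (sum_subset inter_subset_left fun γ hγ hn =>
          hvanish γ fun h => hn (mem_inter.2 ⟨hγ, hS γ h⟩)).symm
    _ = ∑ γ ∈ S, coeff e (F γ) :=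
        sum_subset inter_subset_right fun γ hγ hn =>
          hvanish γ fun h => hn (mem_inter.2 ⟨mem_degreeBox_of_degree_le h, hγ⟩)

lemma mul_mSum (A : MvPowerSeries (Fin m) ℂ) {F : (Fin m →₀ ℕ) → MvPowerSeries (Fin m) ℂ}
    (hF : ∀ γ, (γ.degree : ℕ∞) ≤ (F γ).order) :
    A * mSum F = mSum fun γ => A * F γ := by
  ext e
  rw [coeff_mSum, coeff_mul]
  simp only [coeff_mul]
  rw [sum_comm]
  refine sum_congr rfl fun pq hpq => ?_
  have hq : pq.2.degree ≤ e.degree := by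
    rw [← mem_antidiagonal.1 hpq, map_add]
    exact Nat.le_add_left _ _
  rw [← mul_sum,
    coeff_mSum_eq_sum_of_subset hF fun γ hγ => mem_degreeBox_of_degree_le (hγ.trans hq)]

end mSum

section taylorShift

variable {m : ℕ} {g : Fin m → MvPowerSeries (Fin m) ℂ}

/-- With `Φ(x) = ∑_β φ_β x^β`, `taylorShift g ε φ β` is the `x^β`-coefficient of `Φ(x + ε g)`. -/
def taylorShift (g : Fin m → MvPowerSeries (Fin m) ℂ) (ε : ℂ)
    (φ : (Fin m →₀ ℕ) → MvPowerSeries (Fin m) ℂ) (β : Fin m →₀ ℕ) : MvPowerSeries (Fin m) ℂ :=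
  mSum fun γ => (ε ^ γ.degree * binomC β γ) • ((∏ j, g j ^ γ j) * φ (β + γ))

lemma taylorShift_eq_add_mSum_ite (ε : ℂ) (φ : (Fin m →₀ ℕ) → MvPowerSeries (Fin m) ℂ)
    (β : Fin m →₀ ℕ) :
    taylorShift g ε φ β = φ β + mSum fun γ => if γ = 0 then 0 else
      (ε ^ mdeg γ * binomC β γ) • ((∏ j, g j ^ γ j) * φ (β + γ)) := by
  rw [taylorShift, mSum_eq_add_mSum_ite]
  simp [binomC_zero_right, mdeg_eq_degree]

lemma coeff_taylorShift (ε : ℂ) (φ : (Fin m →₀ ℕ) → MvPowerSeries (Fin m) ℂ)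
    (β e : Fin m →₀ ℕ) :
    coeff e (taylorShift g ε φ β)
      = ∑ γ ∈ degreeBox e, ε ^ γ.degree * binomC β γ * coeff e ((∏ j, g j ^ γ j) * φ (β + γ)) := by
  simp only [taylorShift, coeff_mSum, map_smul, smul_eq_mul]

lemma coeff_prod_pow_mul_taylorShift (hg : ∀ j, constantCoeff (g j) = 0) (ε : ℂ)
    (φ : (Fin m →₀ ℕ) → MvPowerSeries (Fin m) ℂ) (β γ e : Fin m →₀ ℕ) :
    coeff e ((∏ j, g j ^ γ j) * taylorShift g ε φ β)
      = ∑ δ ∈ degreeBox e, ε ^ δ.degree * binomC β δ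
          * coeff e ((∏ j, g j ^ (γ + δ) j) * φ (β + δ)) := by
  have hterm : ∀ δ, (δ.degree : ℕ∞)
      ≤ ((ε ^ δ.degree * binomC β δ) • ((∏ j, g j ^ δ j) * φ (β + δ))).order := fun δ =>
    (le_order_prod_pow_mul hg δ _).trans le_order_smul
  rw [taylorShift, mul_mSum _ hterm, coeff_mSum]
  refine sum_congr rfl fun δ _ => ?_
  simp only [mul_smul_comm, map_smul, smul_eq_mul, ← mul_assoc, Finsupp.coe_add, Pi.add_apply,
    pow_add, prod_mul_distrib]

theorem taylorShift_taylorShift_neg (hg : ∀ j, constantCoeff (g j) = 0) (ε : ℂ)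
    (φ : (Fin m →₀ ℕ) → MvPowerSeries (Fin m) ℂ) :
    taylorShift g ε (taylorShift g (-ε) φ) = φ := by
  funext β
  ext e
  set a : (Fin m →₀ ℕ) → ℂ := fun σ => coeff e ((∏ j, g j ^ σ j) * φ (β + σ))
  have ha : ∀ σ, σ ∉ degreeBox e → a σ = 0 := fun σ hσ =>
    coeff_of_lt_order <| (Nat.cast_lt.2 (not_le.1 (mt mem_degreeBox_of_degree_le hσ))).trans_le
      (le_order_prod_pow_mul hg σ _)
  calc coeff e (taylorShift g ε (taylorShift g (-ε) φ) β)
      = ∑ γ ∈ degreeBox e, ∑ δ ∈ degreeBox e,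
          ε ^ γ.degree * (-ε) ^ δ.degree * binomC β γ * binomC (β + γ) δ * a (γ + δ) := by
        rw [coeff_taylorShift]
        refine sum_congr rfl fun γ _ => ?_
        rw [coeff_prod_pow_mul_taylorShift hg, mul_sum]
        refine sum_congr rfl fun δ _ => ?_
        simp only [a, add_assoc]
        ring
    _ = ∑ σ ∈ degreeBox e, ∑ γ ∈ Iic σ, ε ^ γ.degree * (-ε) ^ (σ - γ).degree * binomC β γ
          * binomC (β + γ) (σ - γ) * a (γ + (σ - γ)) :=
        sum_sum_eq_sum_sum_Iic (fun σ hσ γ hγ => mem_Iic.2 (hγ.trans (mem_Iic.1 hσ))) _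
          fun γ δ h => by rw [ha _ h, mul_zero]
    _ = ∑ σ ∈ degreeBox e, (ε + -ε) ^ σ.degree * binomC β σ * a σ := by
        refine sum_congr rfl fun σ _ => ?_
        rw [← sum_Iic_pow_mul_binomC_mul_binomC, sum_mul]
        refine sum_congr rfl fun γ hγ => ?_
        rw [add_tsub_cancel_of_le (mem_Iic.1 hγ)]
        ring
    _ = coeff e (φ β) := by
        rw [sum_eq_single_of_mem 0 (zero_mem_degreeBox e) fun σ _ hσ => by
          rw [add_neg_cancel, zero_pow ((Finsupp.degree_eq_zero_iff σ).not.2 hσ), zero_mul,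
            zero_mul]]
        simp [a, binomC_zero_right]

theorem taylorShift_eq_iff (hg : ∀ j, constantCoeff (g j) = 0) (ε : ℂ)
    (φ ψ : (Fin m →₀ ℕ) → MvPowerSeries (Fin m) ℂ) :
    taylorShift g ε φ = ψ ↔ φ = taylorShift g (-ε) ψ := by
  constructor
  · rintro rfl
    simpa using (taylorShift_taylorShift_neg hg (-ε) φ).symm
  · rintro rfl
    exact taylorShift_taylorShift_neg hg ε ψ

end taylorShift

theorem formal_triangular_inversion {m : ℕ}
    (g : Fin m → MvPowerSeries (Fin m) ℂ)
    (hg : ∀ j, MvPowerSeries.constantCoeff (g j) = 0)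
    (ψ ω : (Fin m →₀ ℕ) → MvPowerSeries (Fin m) ℂ) :
    (∀ β : Fin m →₀ ℕ,
      ψ β + mSum (fun γ => if γ = 0 then 0 else
        binomC β γ • ((∏ j : Fin m, g j ^ γ j) * ψ (β + γ))) = ω β)
    ↔
    (∀ β : Fin m →₀ ℕ,
      ψ β = ω β + mSum (fun γ => if γ = 0 then 0 else
        ((-1 : ℂ) ^ mdeg γ * binomC β γ) • ((∏ j : Fin m, g j ^ γ j) * ω (β + γ)))) := by
  have hleft : ∀ β, taylorShift g 1 ψ β = ψ β + mSum (fun γ => if γ = 0 then 0 else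
      binomC β γ • ((∏ j : Fin m, g j ^ γ j) * ψ (β + γ))) := fun β => by
    simp only [taylorShift_eq_add_mSum_ite, one_pow, one_mul]
  simp only [← hleft, ← taylorShift_eq_add_mSum_ite, ← funext_iff]
  exact taylorShift_eq_iff hg 1 ψ ω
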